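/- arXiv:2003.08236 — 7 statements merged into one kernel-verified Lean document; each statement's English description precedes it below -/
import Mathlib

section
/- Let λ ≥ 1 and ε > 0. Two closed disks of radii r₁, r₂ with r₁² = (λ²+1)/4 - ε and r₂² = 1/4 cannot be placed in the plane so as to cover a closed λ×1 rectangle. -/
/-!
The disk of radius `r₁` is smaller than the circumcircle, so it cannot contain both ends of a
diagonal. Hence the disk of diameter `1` contains a corner from each diagonal, that is, two
adjacent corners `P`, `Q` at distance at least `1`; this forces it to be the disk with diameter
`PQ`. By Pythagoras it then misses the corner `P'` next to `P` and every point of the side from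
`Q` to `Q'` other than `Q`, so the closed disk of radius `r₁` contains `P'` and, in the limit,
`Q`: a diagonal after all.
-/

/-- The closed axis-aligned rectangle [0,w] × [0,h] in the Euclidean plane. -/
def rect (w h : ℝ) : Set (EuclideanSpace ℝ (Fin 2)) :=
  {p | p 0 ∈ Set.Icc 0 w ∧ p 1 ∈ Set.Icc 0 h}

open Metric Set Filter Topology RealInnerProductSpace

section Metric

variable {X : Type*} [PseudoMetricSpace X]

theorem dist_le_two_mul_of_mem_closedBall {c p q : X} {r : ℝ} (hp : p ∈ closedBall c r)
    (hq : q ∈ closedBall c r) : dist p q ≤ 2 * r := by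
  rw [mem_closedBall] at hp hq
  linarith [dist_triangle_right p q c]

theorem mem_or_mem_of_two_mul_lt_dist {S : Set X} {c₁ c₂ p q : X} {r₁ r₂ : ℝ}
    (hS : S ⊆ closedBall c₁ r₁ ∪ closedBall c₂ r₂) (hp : p ∈ S) (hq : q ∈ S)
    (hpq : 2 * r₁ < dist p q) : p ∈ closedBall c₂ r₂ ∨ q ∈ closedBall c₂ r₂ := by
  by_contra! h
  have hp₁ := (hS hp).resolve_right h.1
  have hq₁ := (hS hq).resolve_right h.2
  exact hpq.not_ge (dist_le_two_mul_of_mem_closedBall hp₁ hq₁)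

end Metric

section StrictConvex

variable {E : Type*} [NormedAddCommGroup E] [NormedSpace ℝ E] [StrictConvexSpace ℝ E]

theorem eq_midpoint_of_mem_closedBall_of_two_mul_le_dist {c p q : E} {r : ℝ}
    (hp : p ∈ closedBall c r) (hq : q ∈ closedBall c r) (hpq : 2 * r ≤ dist p q) :
    c = midpoint ℝ p q ∧ r = dist p q / 2 := by
  rw [mem_closedBall] at hp hq
  have htri := dist_triangle p c q
  rw [dist_comm] at hq
  exact ⟨eq_midpoint_of_dist_eq_half (by linarith) (by linarith), by linarith⟩

end StrictConvex

section InnerProduct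

variable {E : Type*} [NormedAddCommGroup E] [InnerProductSpace ℝ E]

theorem dist_lt_dist_add_of_inner_eq_zero {x y v : E} (h : ⟪x - y, v⟫ = 0) (hv : v ≠ 0) :
    dist x y < dist (x + v) y := by
  rw [dist_eq_norm, dist_eq_norm, add_sub_right_comm]
  refine lt_of_pow_lt_pow_left₀ 2 (norm_nonneg _) ?_
  rw [norm_add_sq_real, h]
  linarith [pow_pos (norm_pos_iff.mpr hv) 2]

theorem dist_le_two_mul_of_subset_union_closedBall {S : Set E} {P Q P' Q' c₁ c₂ : E}
    {r₁ r₂ : ℝ} (hS : S ⊆ closedBall c₁ r₁ ∪ closedBall c₂ r₂)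
    (hP : P ∈ closedBall c₂ r₂) (hQ : Q ∈ closedBall c₂ r₂) (hPQ : 2 * r₂ ≤ dist P Q)
    (hpar : P' - P = Q' - Q) (hperp : ⟪Q - P, Q' - Q⟫ = 0) (hQQ' : Q ≠ Q')
    (hseg : segment ℝ Q Q' ⊆ S) (hP' : P' ∈ S) :
    dist Q P' ≤ 2 * r₁ := by
  obtain ⟨rfl, rfl⟩ := eq_midpoint_of_mem_closedBall_of_two_mul_le_dist hP hQ hPQ
  set w := Q' - Q
  have hfar : ∀ X ∈ S, dist P Q / 2 < dist X (midpoint ℝ P Q) → X ∈ closedBall c₁ r₁ :=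
    fun X hX hXm ↦ (hS hX).resolve_right (by simpa [mem_closedBall] using hXm)
  have hP'₁ : P' ∈ closedBall c₁ r₁ := by
    refine hfar P' hP' ?_
    have hPm : ⟪P - midpoint ℝ P Q, w⟫ = 0 := by
      rw [left_sub_midpoint, ← neg_sub Q P, real_inner_smul_left, inner_neg_left, hperp]; simp
    have := dist_lt_dist_add_of_inner_eq_zero hPm (sub_ne_zero.mpr hQQ'.symm)
    rwa [← hpar, add_sub_cancel, dist_left_midpoint, Real.norm_two, inv_mul_eq_div] at this
  have hQ₁ : Q ∈ closedBall c₁ r₁ := by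
    have hlim : Tendsto (fun t : ℝ ↦ Q + t • w) (𝓝[>] 0) (𝓝 Q) := by
      have : Continuous fun t : ℝ ↦ Q + t • w := by fun_prop
      simpa using (this.tendsto 0).mono_left nhdsWithin_le_nhds
    refine isClosed_closedBall.mem_of_tendsto hlim ?_
    filter_upwards [Ioo_mem_nhdsGT one_pos] with t ht
    refine hfar _ (hseg ?_) ?_
    · rw [segment_eq_image']
      exact ⟨t, Ioo_subset_Icc_self ht, rfl⟩
    · have hQm : ⟪Q - midpoint ℝ P Q, t • w⟫ = 0 := by
        rw [right_sub_midpoint, real_inner_smul_left, real_inner_smul_right, hperp]; simp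
      have := dist_lt_dist_add_of_inner_eq_zero hQm
        (smul_ne_zero ht.1.ne' (sub_ne_zero.mpr hQQ'.symm))
      rwa [dist_right_midpoint, Real.norm_two, inv_mul_eq_div] at this
  exact dist_le_two_mul_of_mem_closedBall hQ₁ hP'₁

end InnerProduct

theorem convex_rect (w h : ℝ) : Convex ℝ (rect w h) :=
  ((convex_Icc 0 w).linear_preimage (EuclideanSpace.proj (0 : Fin 2) (𝕜 := ℝ)).toLinearMap).inter
    ((convex_Icc 0 h).linear_preimage (EuclideanSpace.proj (1 : Fin 2) (𝕜 := ℝ)).toLinearMap)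

namespace EuclideanSpace

theorem vec2_sub_vec2 (x y x' y' : ℝ) : !₂[x, y] - !₂[x', y'] = !₂[x - x', y - y'] := by
  rw [← WithLp.toLp_sub]; simp

theorem inner_vec2_vec2 (x y x' y' : ℝ) : ⟪!₂[x, y], !₂[x', y']⟫ = x * x' + y * y' := by
  simp [PiLp.inner_apply, Fin.sum_univ_two]; ring

theorem dist_vec2_vec2 (x y x' y' : ℝ) :
    dist !₂[x, y] !₂[x', y'] = √((x - x') ^ 2 + (y - y') ^ 2) := by
  simp [EuclideanSpace.dist_eq, Fin.sum_univ_two, Real.dist_eq, sq_abs]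

end EuclideanSpace

open EuclideanSpace

theorem stmt_4_general (lam ε : ℝ) (hlam : 1 ≤ lam) (hε : 0 < ε)
    (r₁ r₂ : ℝ)
    (hr₁ : r₁ ^ 2 = (lam ^ 2 + 1) / 4 - ε) (hr₂ : r₂ ^ 2 = 1 / 4) :
    ¬ ∃ c₁ c₂ : EuclideanSpace ℝ (Fin 2),
        rect lam 1 ⊆ Metric.closedBall c₁ r₁ ∪ Metric.closedBall c₂ r₂ := by
  rintro ⟨c₁, c₂, hcov⟩
  set A : EuclideanSpace ℝ (Fin 2) := !₂[0, 0]
  set B : EuclideanSpace ℝ (Fin 2) := !₂[lam, 0]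
  set C : EuclideanSpace ℝ (Fin 2) := !₂[0, 1]
  set D : EuclideanSpace ℝ (Fin 2) := !₂[lam, 1]
  have hlam₀ : 0 < lam := by linarith
  obtain ⟨hA, hB, hC, hD⟩ : A ∈ rect lam 1 ∧ B ∈ rect lam 1 ∧ C ∈ rect lam 1 ∧ D ∈ rect lam 1 := by
    simp [A, B, C, D, rect, hlam₀.le]
  have hr₁lt : 2 * r₁ < √(lam ^ 2 + 1) := Real.lt_sqrt_of_sq_lt (by nlinarith)
  have hr₂le : 2 * r₂ ≤ 1 := by nlinarith
  have hAD : 2 * r₁ < dist A D := by simpa [A, D, dist_vec2_vec2] using hr₁lt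
  have hBC : 2 * r₁ < dist B C := by simpa [B, C, dist_vec2_vec2] using hr₁lt
  have hCB : 2 * r₁ < dist C B := dist_comm B C ▸ hBC
  have hdiag_le : ∀ {P Q P' Q'}, P ∈ closedBall c₂ r₂ → Q ∈ closedBall c₂ r₂ → 1 ≤ dist P Q →
      P' - P = Q' - Q → ⟪Q - P, Q' - Q⟫ = 0 → Q ≠ Q' →
      Q ∈ rect lam 1 → Q' ∈ rect lam 1 → P' ∈ rect lam 1 → dist Q P' ≤ 2 * r₁ :=
    fun hP hQ hPQ hpar hperp hQQ' hQr hQ'r hP'r ↦ dist_le_two_mul_of_subset_union_closedBall hcov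
      hP hQ (hr₂le.trans hPQ) hpar hperp hQQ' ((convex_rect _ _).segment_subset hQr hQ'r) hP'r
  rcases mem_or_mem_of_two_mul_lt_dist hcov hA hD hAD with hA₂ | hD₂ <;>
    rcases mem_or_mem_of_two_mul_lt_dist hcov hB hC hBC with hB₂ | hC₂
  · refine hBC.not_ge (hdiag_le hA₂ hB₂ ?_ ?_ ?_ ?_ hB hD hC) <;>
      simp [A, B, C, D, vec2_sub_vec2, inner_vec2_vec2, dist_vec2_vec2, abs_of_pos hlam₀, hlam]
  · refine hCB.not_ge (hdiag_le hA₂ hC₂ ?_ ?_ ?_ ?_ hC hD hB) <;>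
      simp [A, B, C, D, vec2_sub_vec2, inner_vec2_vec2, dist_vec2_vec2, hlam₀.ne]
  · refine hBC.not_ge (hdiag_le hD₂ hB₂ ?_ ?_ ?_ ?_ hB hA hC) <;>
      simp [A, B, C, D, vec2_sub_vec2, inner_vec2_vec2, dist_vec2_vec2, hlam₀.ne']
  · refine hCB.not_ge (hdiag_le hD₂ hC₂ ?_ ?_ ?_ ?_ hC hA hB) <;>
      simp [A, B, C, D, vec2_sub_vec2, inner_vec2_vec2, dist_vec2_vec2, abs_of_pos hlam₀, hlam]

/-- For λ ≥ 1 and ε > 0, two closed disks of radii r₁,r₂ with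
r₁² = (λ²+1)/4 − ε and r₂² = 1/4 cannot cover the λ×1 rectangle. -/
theorem stmt_4 (lam ε : ℝ) (hlam : 1 ≤ lam) (hε : 0 < ε)
    (r₁ r₂ : ℝ) (hr₁0 : 0 ≤ r₁) (hr₂0 : 0 ≤ r₂)
    (hr₁ : r₁ ^ 2 = (lam ^ 2 + 1) / 4 - ε) (hr₂ : r₂ ^ 2 = 1 / 4) :
    ¬ ∃ c₁ c₂ : EuclideanSpace ℝ (Fin 2),
        rect lam 1 ⊆ Metric.closedBall c₁ r₁ ∪ Metric.closedBall c₂ r₂ :=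
  stmt_4_general lam ε hlam hε r₁ r₂ hr₁ hr₂
end

section
/- The function d*(λ) = max(3(λ²/16 + 5/32 + 9/(256λ²)), (λ²+2)/4)/λ on [1,∞) is strictly decreasing on [1, sqrt 2] and strictly increasing on [sqrt 2, ∞), with minimum value d*(sqrt 2) = 1/sqrt 2. -/
/-- The normalized critical covering density of a λ×1 rectangle. -/
noncomputable def dStar (l : ℝ) : ℝ :=
  max (3 * (l ^ 2 / 16 + 5 / 32 + 9 / (256 * l ^ 2))) ((l ^ 2 + 2) / 4) / l

/-!
For `l > 0`, `dStar l = max (F l) (G l)` with `G l = (l + 2 / l) / 4` and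
`F l = 3 / 16 * (l + (5 / 2) / l) + 27 / (256 * l ^ 3)`. A function `x + c / x` decreases on
`(0, √c]` and increases on `[√c, ∞)`, so both branches decrease on `(0, √2]` (as `√2 < √(5/2)`).
For `l ≥ √2` the branch `G` dominates, since `256 l³ (G l - F l) = 16 l⁴ + 8 l² - 27 ≥ 0`,
and `G` increases there.
-/

open Set Real

theorem StrictAntiOn.max {α β : Type*} [Preorder α] [LinearOrder β] {f g : α → β} {s : Set α}
    (hf : StrictAntiOn f s) (hg : StrictAntiOn g s) :
    StrictAntiOn (fun x => max (f x) (g x)) s :=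
  fun _ ha _ hb hab => max_lt_max (hf ha hb hab) (hg ha hb hab)

theorem strictAntiOn_add_div_self {c : ℝ} (hc : 0 < c) :
    StrictAntiOn (fun x : ℝ => x + c / x) (Ioc 0 √c) := by
  rintro x ⟨hx, -⟩ y ⟨hy, hyc⟩ hxy
  have hy2 : y ^ 2 ≤ c := (le_sqrt hy.le hc.le).1 hyc
  have hxyc : x * y < c := by nlinarith
  have key : (x + c / x) - (y + c / y) = (y - x) * (c - x * y) / (x * y) := by
    field_simp
    ring
  have : 0 < (y - x) * (c - x * y) / (x * y) :=
    div_pos (mul_pos (sub_pos.2 hxy) (sub_pos.2 hxyc)) (mul_pos hx hy)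
  linarith

theorem strictMonoOn_add_div_self {c : ℝ} (hc : 0 < c) :
    StrictMonoOn (fun x : ℝ => x + c / x) (Ici √c) := by
  intro x (hxc : √c ≤ x) y (hyc : √c ≤ y) hxy
  have hx : 0 < x := (sqrt_pos.2 hc).trans_le hxc
  have hy : 0 < y := hx.trans hxy
  have hx2 : c ≤ x ^ 2 := (sqrt_le_left hx.le).1 hxc
  have hxyc : c < x * y := by nlinarith
  have key : (y + c / y) - (x + c / x) = (y - x) * (x * y - c) / (x * y) := by
    field_simp
    ring
  have : 0 < (y - x) * (x * y - c) / (x * y) :=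
    div_pos (mul_pos (sub_pos.2 hxy) (sub_pos.2 hxyc)) (mul_pos hx hy)
  linarith

theorem dStar_eq_max {l : ℝ} (hl : 0 < l) :
    dStar l = max (3 / 16 * (l + 5 / 2 / l) + 27 / 256 * (l ^ 3)⁻¹) ((l + 2 / l) / 4) := by
  rw [dStar, ← max_div_div_right hl.le]
  congr 1 <;> field_simp
  ring

theorem strictAntiOn_dStar_firstBranch :
    StrictAntiOn (fun l : ℝ => 3 / 16 * (l + 5 / 2 / l) + 27 / 256 * (l ^ 3)⁻¹) (Ioc 0 √2) := by
  intro a ha b hb hab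
  have hsub : Ioc 0 √2 ⊆ Ioc (0 : ℝ) √(5 / 2) :=
    Ioc_subset_Ioc_right (sqrt_le_sqrt (by norm_num))
  have h1 := strictAntiOn_add_div_self (by norm_num) (hsub ha) (hsub hb) hab
  have h2 : (b ^ 3)⁻¹ < (a ^ 3)⁻¹ := by
    have := ha.1
    gcongr
  simp only at h1 ⊢
  linarith

theorem dStar_eq_of_sqrt_two_le {l : ℝ} (hl : √2 ≤ l) : dStar l = (l + 2 / l) / 4 := by
  have hl0 : 0 < l := (sqrt_pos.2 two_pos).trans_le hl
  have hl2 : 2 ≤ l ^ 2 := (sqrt_le_left hl0.le).1 hl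
  rw [dStar_eq_max hl0, max_eq_right]
  rw [← sub_nonneg]
  have key : (l + 2 / l) / 4 - (3 / 16 * (l + 5 / 2 / l) + 27 / 256 * (l ^ 3)⁻¹) =
      (16 * l ^ 4 + 8 * l ^ 2 - 27) / (256 * l ^ 3) := by
    field_simp
    ring
  rw [key]
  exact div_nonneg (by nlinarith) (by positivity)

/-- d* is strictly decreasing on [1,√2], strictly increasing on [√2,∞), with
minimum value d*(√2) = 1/√2. -/
theorem stmt_8 :
    StrictAntiOn dStar (Set.Icc 1 (Real.sqrt 2)) ∧
    StrictMonoOn dStar (Set.Ici (Real.sqrt 2)) ∧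
    dStar (Real.sqrt 2) = 1 / Real.sqrt 2 := by
  refine ⟨?_, ?_, ?_⟩
  · have hmax := strictAntiOn_dStar_firstBranch.max
      ((strictMono_div_right_of_pos four_pos).comp_strictAntiOn (strictAntiOn_add_div_self two_pos))
    exact (hmax.congr fun l hl => (dStar_eq_max hl.1).symm).mono
      fun l hl => ⟨one_pos.trans_le hl.1, hl.2⟩
  · exact ((strictMono_div_right_of_pos four_pos).comp_strictMonoOn
      (strictMonoOn_add_div_self two_pos)).congr fun l hl => (dStar_eq_of_sqrt_two_le hl).symm
  · rw [dStar_eq_of_sqrt_two_le le_rfl]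
    field_simp
    norm_num
end

section
/- The unique λ > 1 satisfying (λ² + 2)/(4λ) = 195/256 is λ̄ = (195 + sqrt 5257)/128, and for all λ with 1 ≤ λ ≤ λ̄ one has max(3(λ²/16 + 5/32 + 9/(256λ²)), (λ²+2)/4) ≤ (195/256)·λ. -/
/-! λ̄ and its conjugate λ' = (195 - √5257)/128 are the roots of 64λ² - 195λ + 128, the cleared form
of (λ² + 2)/(4λ) = 195/256; since λ' < 1 < λ̄, the quadratic is nonpositive on [1, λ̄], which is the
bound for the second term of the max. The first term needs only 1 ≤ λ ≤ 3: cleared of denominators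
it reads (λ - 1)(48λ³ - 147λ² - 27λ - 27) ≤ 0, and the cubic is negative there. -/

open Real

local notation "λ̄" => (195 + √5257) / 128

local notation "λ'" => (195 - √5257) / 128

lemma sq_sqrt_5257 : √5257 ^ 2 = 5257 := sq_sqrt (by norm_num)

lemma lt_sqrt_5257 : 67 < √5257 := by
  rw [lt_sqrt (by norm_num)]; norm_num

lemma sqrt_5257_lt : √5257 < 73 := by
  rw [sqrt_lt' (by norm_num)]; norm_num

lemma conj_root_lt_one : λ' < 1 := by
  linarith [lt_sqrt_5257]

lemma one_lt_root : 1 < λ̄ := by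
  linarith [lt_sqrt_5257]

lemma root_lt_three : λ̄ < 3 := by
  linarith [sqrt_5257_lt]

/-- The discriminant of `64 l ^ 2 - 195 l + 128` is `195 ^ 2 - 4 * 64 * 128 = 5257`. -/
lemma quadratic_eq_mul_sub_root_mul_sub_conj_root (l : ℝ) :
    64 * l ^ 2 - 195 * l + 128 = 64 * ((l - λ̄) * (l - λ')) := by
  linear_combination (1 / 256 : ℝ) * sq_sqrt_5257

lemma div_eq_iff_quadratic_eq_zero {l : ℝ} (hl : l ≠ 0) :
    (l ^ 2 + 2) / (4 * l) = 195 / 256 ↔ 64 * l ^ 2 - 195 * l + 128 = 0 := by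
  rw [div_eq_div_iff (by positivity) (by norm_num)]
  constructor <;> intro h <;> linarith

lemma quadratic_root_eq_zero : 64 * λ̄ ^ 2 - 195 * λ̄ + 128 = 0 := by
  rw [quadratic_eq_mul_sub_root_mul_sub_conj_root, sub_self, zero_mul, mul_zero]

lemma eq_root_of_quadratic_eq_zero {l : ℝ} (hl : 1 < l) (h : 64 * l ^ 2 - 195 * l + 128 = 0) :
    l = λ̄ := by
  rw [quadratic_eq_mul_sub_root_mul_sub_conj_root] at h
  rcases mul_eq_zero.1 ((mul_eq_zero.1 h).resolve_left (by norm_num)) with h | h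
  · exact sub_eq_zero.1 h
  · linarith [conj_root_lt_one]

lemma quadratic_nonpos_of_mem_Icc {l : ℝ} (hl₁ : 1 ≤ l) (hl₂ : l ≤ λ̄) :
    64 * l ^ 2 - 195 * l + 128 ≤ 0 := by
  rw [quadratic_eq_mul_sub_root_mul_sub_conj_root]
  have : (l - λ̄) * (l - λ') ≤ 0 :=
    mul_nonpos_of_nonpos_of_nonneg (by linarith) (by linarith [conj_root_lt_one])
  linarith

lemma add_two_div_four_le {l : ℝ} (hl₁ : 1 ≤ l) (hl₂ : l ≤ λ̄) :
    (l ^ 2 + 2) / 4 ≤ 195 / 256 * l := by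
  linarith [quadratic_nonpos_of_mem_Icc hl₁ hl₂]

lemma quartic_nonpos {l : ℝ} (hl₁ : 1 ≤ l) (hl₂ : l ≤ 3) :
    48 * l ^ 4 - 195 * l ^ 3 + 120 * l ^ 2 + 27 ≤ 0 := by
  have hcubic : 48 * l ^ 3 - 147 * l ^ 2 - 27 * l - 27 < 0 := by
    have : l ^ 2 * (48 * l - 147) ≤ 0 := mul_nonpos_of_nonneg_of_nonpos (by positivity) (by linarith)
    linarith
  have hfactor : 48 * l ^ 4 - 195 * l ^ 3 + 120 * l ^ 2 + 27 =
      (l - 1) * (48 * l ^ 3 - 147 * l ^ 2 - 27 * l - 27) := by ring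
  rw [hfactor]
  exact mul_nonpos_of_nonneg_of_nonpos (by linarith) hcubic.le

lemma three_mul_weight_le {l : ℝ} (hl₁ : 1 ≤ l) (hl₂ : l ≤ 3) :
    3 * (l ^ 2 / 16 + 5 / 32 + 9 / (256 * l ^ 2)) ≤ 195 / 256 * l := by
  have hl : 0 < l := by linarith
  have hcleared : 3 * (l ^ 2 / 16 + 5 / 32 + 9 / (256 * l ^ 2)) =
      (48 * l ^ 4 + 120 * l ^ 2 + 27) / (256 * l ^ 2) := by
    field_simp
    ring
  rw [hcleared, div_le_iff₀ (by positivity)]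
  linarith [quartic_nonpos hl₁ hl₂]

/-- λ̄ = (195+√5257)/128 is the unique λ > 1 with (λ²+2)/(4λ) = 195/256, and
for 1 ≤ λ ≤ λ̄ the critical covering weight is at most (195/256)λ. -/
theorem stmt_9 :
    (1 < (195 + Real.sqrt 5257) / 128 ∧
      (((195 + Real.sqrt 5257) / 128) ^ 2 + 2) / (4 * ((195 + Real.sqrt 5257) / 128)) =
        195 / 256) ∧
    (∀ l : ℝ, 1 < l → (l ^ 2 + 2) / (4 * l) = 195 / 256 →
      l = (195 + Real.sqrt 5257) / 128) ∧
    (∀ l : ℝ, 1 ≤ l → l ≤ (195 + Real.sqrt 5257) / 128 →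
      max (3 * (l ^ 2 / 16 + 5 / 32 + 9 / (256 * l ^ 2))) ((l ^ 2 + 2) / 4) ≤
        195 / 256 * l) := by
  refine ⟨⟨one_lt_root, ?_⟩, fun l hl h => ?_, fun l hl₁ hl₂ => ?_⟩
  · exact (div_eq_iff_quadratic_eq_zero (by linarith [one_lt_root])).2 quadratic_root_eq_zero
  · exact eq_root_of_quadratic_eq_zero hl ((div_eq_iff_quadratic_eq_zero (by linarith)).1 h)
  · exact max_le (three_mul_weight_le hl₁ (hl₂.trans root_lt_three.le)) (add_two_div_four_le hl₁ hl₂)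
end

section
/- Let E > 1/2, s = sqrt(4E² − 2E·sqrt(4E²−1)), and q₁ ≥ q_i > 0 with q_i ≥ s·q₁. If a disk of radius q_i covers an inscribed rectangle of width sqrt(2)·q₁ and height h_i = sqrt(4q_i² − 2q₁²), then q_i² ≤ E · sqrt(2)·q₁ · h_i. -/
/-!
Squaring, and writing `u = qᵢ² / q₁²`, the claim becomes `u² - 8E²u + 4E² ≤ 0`. The roots of
this quadratic are `s² = 4E² - 2E√(4E² - 1)` and `4E² + 2E√(4E² - 1) ≥ 1`, so it holds on
`[s², 1]`; moreover `s² ≥ 1/2`, which keeps the height `√(4qᵢ² - 2q₁²)` real.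
-/

open Real

lemma sub_mul_sub_eq_of_one_le_four_mul_sq {E : ℝ} (hE : 1 ≤ 4 * E ^ 2) (x y : ℝ) :
    (x - (4 * E ^ 2 - 2 * E * √(4 * E ^ 2 - 1)) * y) *
        (x - (4 * E ^ 2 + 2 * E * √(4 * E ^ 2 - 1)) * y) =
      x ^ 2 - 8 * E ^ 2 * x * y + 4 * E ^ 2 * y ^ 2 := by
  have ht : √(4 * E ^ 2 - 1) ^ 2 = 4 * E ^ 2 - 1 := sq_sqrt (by linarith)
  linear_combination (-(4 * E ^ 2) * y ^ 2) * ht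

lemma one_half_le_four_mul_sq_sub_two_mul_sqrt {E : ℝ} (hE : 1 / 2 ≤ E) :
    1 / 2 ≤ 4 * E ^ 2 - 2 * E * √(4 * E ^ 2 - 1) := by
  have ht : √(4 * E ^ 2 - 1) ^ 2 = 4 * E ^ 2 - 1 := sq_sqrt (by nlinarith)
  nlinarith [sq_nonneg (2 * E - √(4 * E ^ 2 - 1))]

lemma sq_le_of_four_mul_sq_sub_two_mul_sqrt_mul_le {E P Q : ℝ} (hE : 1 / 2 ≤ E) (hP : 0 ≤ P)
    (hlow : (4 * E ^ 2 - 2 * E * √(4 * E ^ 2 - 1)) * P ≤ Q) (hup : Q ≤ P) :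
    Q ^ 2 ≤ 2 * E ^ 2 * P * (4 * Q - 2 * P) := by
  have hroot : 1 ≤ 4 * E ^ 2 + 2 * E * √(4 * E ^ 2 - 1) := by
    nlinarith [mul_nonneg (by linarith : (0 : ℝ) ≤ E) (sqrt_nonneg (4 * E ^ 2 - 1))]
  have hneg : (Q - (4 * E ^ 2 - 2 * E * √(4 * E ^ 2 - 1)) * P) *
      (Q - (4 * E ^ 2 + 2 * E * √(4 * E ^ 2 - 1)) * P) ≤ 0 :=
    mul_nonpos_of_nonneg_of_nonpos (sub_nonneg.2 hlow) (by nlinarith)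
  rw [sub_mul_sub_eq_of_one_le_four_mul_sq (by nlinarith)] at hneg
  linarith

/-- Wall-building coefficient bound: for E > 1/2, s = √(4E² − 2E√(4E²−1)),
and s·q₁ ≤ qᵢ ≤ q₁, a disk of radius qᵢ covering an inscribed rectangle of
width √2·q₁ and height hᵢ = √(4qᵢ² − 2q₁²) has weight at most E times the
rectangle area. -/
theorem stmt_11 (E q₁ qi : ℝ) (hE : 1 / 2 < E) (hq₁ : 0 < qi) (hle : qi ≤ q₁)
    (hs : Real.sqrt (4 * E ^ 2 - 2 * E * Real.sqrt (4 * E ^ 2 - 1)) * q₁ ≤ qi) :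
    qi ^ 2 ≤ E * (Real.sqrt 2 * q₁) * Real.sqrt (4 * qi ^ 2 - 2 * q₁ ^ 2) := by
  have hq₁pos : 0 < q₁ := hq₁.trans_le hle
  have ha := one_half_le_four_mul_sq_sub_two_mul_sqrt hE.le
  have hlow : (4 * E ^ 2 - 2 * E * √(4 * E ^ 2 - 1)) * q₁ ^ 2 ≤ qi ^ 2 := by
    have := pow_le_pow_left₀ (by positivity) hs 2
    rwa [mul_pow, sq_sqrt (by linarith)] at this
  have hkey := sq_le_of_four_mul_sq_sub_two_mul_sqrt_mul_le hE.le (sq_nonneg q₁) hlow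
    (pow_le_pow_left₀ hq₁.le hle 2)
  have hheight : 0 ≤ 4 * qi ^ 2 - 2 * q₁ ^ 2 := by
    nlinarith [mul_le_mul_of_nonneg_right ha (sq_nonneg q₁)]
  refine (pow_le_pow_iff_left₀ (by positivity) (by positivity) two_ne_zero).1 ?_
  calc (qi ^ 2) ^ 2 ≤ 2 * E ^ 2 * q₁ ^ 2 * (4 * qi ^ 2 - 2 * q₁ ^ 2) := hkey
    _ = (E * (√2 * q₁) * √(4 * qi ^ 2 - 2 * q₁ ^ 2)) ^ 2 := by
      rw [mul_pow, mul_pow, mul_pow, sq_sqrt hheight, sq_sqrt zero_le_two]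
      ring
end

section
/- Let λ ≥ λ̄ = (195+sqrt 5257)/128, r̄² = (195·λ̄)/128 − 11/4, and r₁ ≥ r̄ with r₁² ≤ (λ²+1)/4. Write x = λ − 2·sqrt(r₁² − 1/4). If x ≥ λ̄, then ((λ²+2)/4) − r₁² ≥ (x²+2)/4. -/
/-! With `s = √(r₁² - 1/4)` the claim reduces to `λ s ≥ 2 s² + 1/4`. Since `x = λ - 2s ≥ λ̄`
gives `λ s ≥ 2 s² + λ̄ s`, it suffices that `λ̄ s ≥ 1/4`, which holds because `λ̄ ≥ 2` and
`r₁² ≥ r̄² ≥ 19/64` force `s ≥ 1/8`. -/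

lemma leftover_weight_ge_of_strip {lam r s L : ℝ} (hr : r ^ 2 = s ^ 2 + 1 / 4) (hs : 0 ≤ s)
    (hLs : 1 ≤ 4 * L * s) (hL : L ≤ lam - 2 * s) :
    ((lam - 2 * s) ^ 2 + 2) / 4 ≤ (lam ^ 2 + 2) / 4 - r ^ 2 := by
  nlinarith [mul_le_mul_of_nonneg_right hL hs]

lemma two_le_lamBar : 2 ≤ (195 + Real.sqrt 5257) / 128 := by
  have : (61 : ℝ) ≤ Real.sqrt 5257 := Real.le_sqrt_of_sq_le (by norm_num)
  linarith

theorem stmt_16_general (lam r₁ : ℝ)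
    (hr₁ : Real.sqrt (195 * ((195 + Real.sqrt 5257) / 128) / 128 - 11 / 4) ≤ r₁)
    (hx : (195 + Real.sqrt 5257) / 128 ≤ lam - 2 * Real.sqrt (r₁ ^ 2 - 1 / 4)) :
    (lam ^ 2 + 2) / 4 - r₁ ^ 2 ≥
      ((lam - 2 * Real.sqrt (r₁ ^ 2 - 1 / 4)) ^ 2 + 2) / 4 := by
  have hL := two_le_lamBar
  have hr₁_sq : 19 / 64 ≤ r₁ ^ 2 := by
    have := (Real.sqrt_le_iff.1 hr₁).2
    linarith
  have hs : 1 / 8 ≤ Real.sqrt (r₁ ^ 2 - 1 / 4) := (Real.le_sqrt' (by norm_num)).2 (by linarith)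
  refine leftover_weight_ge_of_strip ?_ (by linarith) ?_ hx
  · rw [Real.sq_sqrt (by linarith)]
    ring
  · nlinarith

/-- Case (a) of the Large Disk routine: with λ ≥ λ̄, r̄² = 195λ̄/128 − 11/4,
r₁ ≥ r̄, r₁² ≤ (λ²+1)/4 and x = λ − 2√(r₁²−1/4) ≥ λ̄, the leftover weight
(λ²+2)/4 − r₁² is at least (x²+2)/4. -/
theorem stmt_16 (lam r₁ : ℝ)
    (hlam : (195 + Real.sqrt 5257) / 128 ≤ lam)
    (hr₁ : Real.sqrt (195 * ((195 + Real.sqrt 5257) / 128) / 128 - 11 / 4) ≤ r₁)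
    (hr₁' : r₁ ^ 2 ≤ (lam ^ 2 + 1) / 4)
    (hx : (195 + Real.sqrt 5257) / 128 ≤ lam - 2 * Real.sqrt (r₁ ^ 2 - 1 / 4)) :
    (lam ^ 2 + 2) / 4 - r₁ ^ 2 ≥
      ((lam - 2 * Real.sqrt (r₁ ^ 2 - 1 / 4)) ^ 2 + 2) / 4 :=
  stmt_16_general lam r₁ hr₁ hx
end

section
/- Let λ ≥ λ̄ = (195+sqrt 5257)/128, r̄ = sqrt((195·λ̄)/128 − 11/4), and r₁ ≥ r̄. Write x = λ − 2·sqrt(r₁² − 1/4) and suppose 1/λ̄ ≤ x < λ̄. Then ((λ²+2)/4) − r₁² ≥ (195/256)·x. -/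
/-!
Writing s = √(r₁² − 1/4) and x = λ − 2s, so that λ = x + 2s and r₁² = s² + 1/4, the leftover
weight is x²/4 + xs + 1/4, and the claim becomes x² + 1 − (195/64 − 4s)x ≥ 0. This is
(x − 1)² + 4x(s − 67/256) ≥ 0, which holds because x > 0 and r₁ ≥ r̄ forces s ≥ 67/256
(numerically s ≥ 0.42).
-/

open Real

lemma leftover_weight_eq (lam r : ℝ) (hr : 1 / 4 ≤ r ^ 2) :
    (lam ^ 2 + 2) / 4 - r ^ 2 =
      (lam - 2 * √(r ^ 2 - 1 / 4)) ^ 2 / 4 + (lam - 2 * √(r ^ 2 - 1 / 4)) * √(r ^ 2 - 1 / 4)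
        + 1 / 4 := by
  have hs := sq_sqrt (sub_nonneg.2 hr)
  linear_combination hs

lemma mul_le_sq_div_four_add_mul_add_quarter {x s : ℝ} (hx : 0 ≤ x) (hs : 67 / 256 ≤ s) :
    195 / 256 * x ≤ x ^ 2 / 4 + x * s + 1 / 4 := by
  nlinarith [sq_nonneg (x - 1), mul_nonneg hx (sub_nonneg.2 hs)]

lemma sq_add_quarter_le_sq_of_rBar_le {r : ℝ}
    (h : √(195 * ((195 + √5257) / 128) / 128 - 11 / 4) ≤ r) :
    (67 / 256) ^ 2 + 1 / 4 ≤ r ^ 2 := by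
  have h72 : 72 < √5257 := (lt_sqrt (by norm_num)).2 (by norm_num)
  linarith [(sqrt_le_iff.1 h).2]

theorem stmt_17_general (lam r₁ : ℝ)
    (hr₁ : Real.sqrt (195 * ((195 + Real.sqrt 5257) / 128) / 128 - 11 / 4) ≤ r₁)
    (hx₁ : 1 / ((195 + Real.sqrt 5257) / 128) ≤ lam - 2 * Real.sqrt (r₁ ^ 2 - 1 / 4)) :
    (lam ^ 2 + 2) / 4 - r₁ ^ 2 ≥
      195 / 256 * (lam - 2 * Real.sqrt (r₁ ^ 2 - 1 / 4)) := by
  have hr := sq_add_quarter_le_sq_of_rBar_le hr₁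
  have hs : 67 / 256 ≤ √(r₁ ^ 2 - 1 / 4) := (le_sqrt' (by norm_num)).2 (by linarith)
  have hx : 0 ≤ lam - 2 * √(r₁ ^ 2 - 1 / 4) := le_trans (by positivity) hx₁
  rw [ge_iff_le, leftover_weight_eq lam r₁ (by nlinarith)]
  exact mul_le_sq_div_four_add_mul_add_quarter hx hs

/-- Case (b) of the Large Disk routine: with λ ≥ λ̄, r₁ ≥ r̄ and
x = λ − 2√(r₁²−1/4) satisfying 1/λ̄ ≤ x < λ̄, the leftover weight
(λ²+2)/4 − r₁² is at least (195/256)x. -/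
theorem stmt_17 (lam r₁ : ℝ)
    (hlam : (195 + Real.sqrt 5257) / 128 ≤ lam)
    (hr₁ : Real.sqrt (195 * ((195 + Real.sqrt 5257) / 128) / 128 - 11 / 4) ≤ r₁)
    (hx₁ : 1 / ((195 + Real.sqrt 5257) / 128) ≤ lam - 2 * Real.sqrt (r₁ ^ 2 - 1 / 4))
    (hx₂ : lam - 2 * Real.sqrt (r₁ ^ 2 - 1 / 4) < (195 + Real.sqrt 5257) / 128) :
    (lam ^ 2 + 2) / 4 - r₁ ^ 2 ≥
      195 / 256 * (lam - 2 * Real.sqrt (r₁ ^ 2 - 1 / 4)) :=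
  stmt_17_general lam r₁ hr₁ hx₁
end

section
/- Let λ ≥ λ̄ = (195+sqrt 5257)/128 and suppose r₁² ≤ r̄² = (195·λ̄)/128 − 11/4. If disks with total weight (λ²+2)/4 are split into two groups whose weights differ by at most r₁², then the lighter group has weight at least (λ²+2)/8 − r̄²/2, and the corresponding proportional share of the width, ω₂ = λ·W₂/W with W = (λ²+2)/4, satisfies ω₂ ≥ 1/λ ; i.e., λ/2 − 2λ·((195·λ̄)/128 − 11/4)/(λ²+2) ≥ 1/λ. -/
/-!
With `x = λ²`, the width inequality `1/λ ≤ λ/2 - 2λr/(λ²+2)` is equivalent to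
`x² - 4rx - 4 ≥ 0`. Since `61 ≤ √5257 ≤ 73`, we have `λ̄ ≥ 2` and `r̄² ≤ 1/2`, and for
`x ≥ 4`, `r ≤ 1/2` this quadratic is at least `x² - 2x - 4 > 0`. The bound on the
lighter group is the average of `W₁ + W₂ = W` and `W₁ - W₂ ≤ r̄²`, and dividing it by `W`
gives the bound on its proportional width.
-/

lemma sqrt_5257_le : Real.sqrt 5257 ≤ 73 :=
  (Real.sqrt_le_left (by norm_num)).2 (by norm_num)

lemma rBarSq_le_half : 195 * ((195 + Real.sqrt 5257) / 128) / 128 - 11 / 4 ≤ 1 / 2 := by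
  linarith [sqrt_5257_le]

lemma one_div_le_half_sub_of_two_le {lam r : ℝ} (hlam : 2 ≤ lam) (hr : r ≤ 1 / 2) :
    1 / lam ≤ lam / 2 - 2 * lam * r / (lam ^ 2 + 2) := by
  have hlam₀ : 0 < lam := by linarith
  have hquad : 0 ≤ lam ^ 4 - 4 * lam ^ 2 * r - 4 := by
    have hsq : 4 ≤ lam ^ 2 := by nlinarith
    nlinarith [mul_le_mul_of_nonneg_left hr (sq_nonneg lam)]
  have hdiff : lam / 2 - 2 * lam * r / (lam ^ 2 + 2) - 1 / lam
      = (lam ^ 4 - 4 * lam ^ 2 * r - 4) / (2 * lam * (lam ^ 2 + 2)) := by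
    field_simp
    ring
  exact sub_nonneg.mp (hdiff ▸ by positivity)

lemma half_sub_le_mul_div_of_le {lam r w : ℝ} (hlam : 0 ≤ lam)
    (hw : (lam ^ 2 + 2) / 8 - r / 2 ≤ w) :
    lam / 2 - 2 * lam * r / (lam ^ 2 + 2) ≤ lam * w / ((lam ^ 2 + 2) / 4) := by
  calc lam / 2 - 2 * lam * r / (lam ^ 2 + 2)
      = lam * ((lam ^ 2 + 2) / 8 - r / 2) / ((lam ^ 2 + 2) / 4) := by
        field_simp
        ring
    _ ≤ lam * w / ((lam ^ 2 + 2) / 4) := by gcongr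

theorem stmt_19_general (lam r₁ W₁ W₂ : ℝ)
    (hlam : (195 + Real.sqrt 5257) / 128 ≤ lam)
    (hr₁ : r₁ ^ 2 ≤ 195 * ((195 + Real.sqrt 5257) / 128) / 128 - 11 / 4)
    (hsum : W₁ + W₂ = (lam ^ 2 + 2) / 4)
    (hdiff : W₁ - W₂ ≤ r₁ ^ 2) :
    W₂ ≥ (lam ^ 2 + 2) / 8 - (195 * ((195 + Real.sqrt 5257) / 128) / 128 - 11 / 4) / 2 ∧
    lam * W₂ / ((lam ^ 2 + 2) / 4) ≥ 1 / lam ∧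
    lam / 2 - 2 * lam * (195 * ((195 + Real.sqrt 5257) / 128) / 128 - 11 / 4) /
        (lam ^ 2 + 2) ≥ 1 / lam := by
  have hlam₂ : 2 ≤ lam := two_le_lamBar.trans hlam
  have hlighter :
      (lam ^ 2 + 2) / 8 - (195 * ((195 + Real.sqrt 5257) / 128) / 128 - 11 / 4) / 2 ≤ W₂ := by
    linarith
  have hwidth := one_div_le_half_sub_of_two_le hlam₂ rBarSq_le_half
  exact ⟨hlighter, hwidth.trans (half_sub_le_mul_div_of_le (by linarith) hlighter), hwidth⟩

/-- Split Cover inequality: for λ ≥ λ̄ and a split of total weight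
W = (λ²+2)/4 into W₁ ≥ W₂ with W₁ − W₂ ≤ r₁² ≤ r̄² = 195λ̄/128 − 11/4, the
lighter group has weight at least (λ²+2)/8 − r̄²/2, the proportional width
ω₂ = λ·W₂/W is at least 1/λ, and indeed
λ/2 − 2λ·(195λ̄/128 − 11/4)/(λ²+2) ≥ 1/λ. -/
theorem stmt_19 (lam r₁ W₁ W₂ : ℝ)
    (hlam : (195 + Real.sqrt 5257) / 128 ≤ lam)
    (hr₁ : r₁ ^ 2 ≤ 195 * ((195 + Real.sqrt 5257) / 128) / 128 - 11 / 4)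
    (hsum : W₁ + W₂ = (lam ^ 2 + 2) / 4)
    (horder : W₂ ≤ W₁)
    (hdiff : W₁ - W₂ ≤ r₁ ^ 2) :
    W₂ ≥ (lam ^ 2 + 2) / 8 - (195 * ((195 + Real.sqrt 5257) / 128) / 128 - 11 / 4) / 2 ∧
    lam * W₂ / ((lam ^ 2 + 2) / 4) ≥ 1 / lam ∧
    lam / 2 - 2 * lam * (195 * ((195 + Real.sqrt 5257) / 128) / 128 - 11 / 4) /
        (lam ^ 2 + 2) ≥ 1 / lam :=
  stmt_19_general lam r₁ W₁ W₂ hlam hr₁ hsum hdiff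
end
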